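/- arXiv:2203.08744 — 2 statements merged into one kernel-verified Lean document; each statement's English description precedes it below -/
import Mathlib

section
/- Stability of topological images under uniform convergence: Let U ⊂⊂ Ω be open, let (y_n) ⊂ C⁰(∂U;ℝ^N) and y ∈ C⁰(∂U;ℝ^N) with y_n → y uniformly on ∂U, and assume L^N(y_n(∂U)) = L^N(y(∂U)) = 0 for every n. Then: (i) for every compact K ⊂ im_T(y,U), one has K ⊂ im_T(y_n,U) for all n large (depending on K); (ii) for every compact K ⊂ ℝ^N ∖ (im_T(y,U) ∪ y(∂U)), one has K ⊂ ℝ^N ∖ (im_T(y_n,U) ∪ y_n(∂U)) for all n large; (iii) for every open O ⊂⊂ ℝ^N with ℝ^N ∖ O connected and y(∂U) ⊂ O, one has im_T(y,U) ⊂ O and im_T(y_n,U) ⊂ O for all n large; (iv) χ_{im_T(y_n,U)} → χ_{im_T(y,U)} in L¹(ℝ^N) and almost everywhere in ℝ^N. -/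
open MeasureTheory Metric Set Filter Topology Bornology ENNReal
open scoped NNReal

noncomputable section

namespace Magnetoelasticity

abbrev EN (N : ℕ) := EuclideanSpace ℝ (Fin N)
abbrev Mat (N : ℕ) := Matrix (Fin N) (Fin N) ℝ

variable {N : ℕ}

/-- View a plain function `Fin N → ℝ` as a Euclidean vector. -/
def toE {N : ℕ} (f : Fin N → ℝ) : EN N := WithLp.toLp 2 f

/-- A matrix acting on a Euclidean vector. -/
def mvec (A : Mat N) (v : EN N) : EN N := toE (A.mulVec (fun i => v i))

/-- Squared Frobenius norm of a matrix. -/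
def mnorm2 (A : Mat N) : ℝ := ∑ i, ∑ j, (A i j) ^ 2

/-- Frobenius norm of a matrix. -/
def mnorm (A : Mat N) : ℝ := Real.sqrt (mnorm2 A)

/-- `j`-th partial derivative of a scalar function at `x`. -/
def pder (φ : EN N → ℝ) (x : EN N) (j : Fin N) : ℝ := fderiv ℝ φ x (EuclideanSpace.single j 1)

/-- Gradient of a scalar function, as a Euclidean vector. -/
def gradE (φ : EN N → ℝ) (x : EN N) : EN N := toE (fun j => pder φ x j)

/-- Smooth test functions compactly supported in `Ω`. -/
def IsTest (Ω : Set (EN N)) (φ : EN N → ℝ) : Prop :=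
  ContDiff ℝ (⊤ : ℕ∞) φ ∧ HasCompactSupport φ ∧ tsupport φ ⊆ Ω

/-- `y` has (componentwise) weak gradient `D` on the open set `Ω`. -/
def HasWeakDeriv (Ω : Set (EN N)) (y : EN N → EN N) (D : EN N → Mat N) : Prop :=
  ∀ φ : EN N → ℝ, IsTest Ω φ → ∀ i j,
    ∫ x in Ω, y x i * pder φ x j = - ∫ x in Ω, D x i j * φ x

/-- A scalar function `u` has weak gradient `G` on `Ω`. -/
def HasWeakDerivScalar (Ω : Set (EN N)) (u : EN N → ℝ) (G : EN N → EN N) : Prop :=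
  ∀ φ : EN N → ℝ, IsTest Ω φ → ∀ j,
    ∫ x in Ω, u x * pder φ x j = - ∫ x in Ω, G x j * φ x

/-- A Sobolev map `Ω → ℝ^N` of class `W^{1,p}`, bundled with its weak gradient. -/
structure SobolevFn (N : ℕ) (Ω : Set (EN N)) (p : ℝ) where
  y : EN N → EN N
  D : EN N → Mat N
  memLp_y : ∀ i, MemLp (fun x => y x i) (ENNReal.ofReal p) (volume.restrict Ω)
  memLp_D : ∀ i j, MemLp (fun x => D x i j) (ENNReal.ofReal p) (volume.restrict Ω)
  weak : HasWeakDeriv Ω y D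

/-- The divergence identities (DIV). -/
def DivIdentities (Ω : Set (EN N)) (y : EN N → EN N) (D : EN N → Mat N) : Prop :=
  ∀ ψ : EN N → EN N, ContDiff ℝ 1 ψ → HasCompactSupport ψ →
  ∀ φ : EN N → ℝ, IsTest Ω φ →
    - (∫ x in Ω, ∑ i, ((D x).adjugate.mulVec (fun k => ψ (y x) k)) i * pder φ x i)
      = ∫ x in Ω, (∑ i, fderiv ℝ (fun z => ψ z i) (y x) (EuclideanSpace.single i 1))
          * (D x).det * φ x

/-- Membership in the class `Y_p(Ω)` of admissible deformations. -/
def IsAdmissible (Ω : Set (EN N)) {p : ℝ} (d : SobolevFn N Ω p) : Prop :=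
  IntegrableOn (fun x => (d.D x).det) Ω volume ∧
  (∀ᵐ x ∂(volume.restrict Ω), 0 < (d.D x).det) ∧
  DivIdentities Ω d.y d.D

/-- `y` is almost everywhere injective on `A`. -/
def AEInjOn (y : EN N → EN N) (A : Set (EN N)) : Prop :=
  ∃ X : Set (EN N), X ⊆ A ∧ volume X = 0 ∧ InjOn y (A \ X)

/-- A bounded Lipschitz domain: open, bounded, connected, with a local Lipschitz
graph description of the boundary. -/
def IsLipschitzDomain (Ω : Set (EN N)) : Prop :=
  IsOpen Ω ∧ IsBounded Ω ∧ IsConnected Ω ∧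
  ∀ x ∈ frontier Ω, ∃ e : EN N, ‖e‖ = 1 ∧ ∃ ε > (0:ℝ), ∃ L : NNReal, ∃ g : EN N → ℝ,
    LipschitzWith L g ∧
    ∀ z ∈ ball x ε, (z ∈ Ω ↔ g (z - (inner ℝ (z - x) e : ℝ) • e) < (inner ℝ (z - x) e : ℝ))

/-- An abstract Brouwer degree theory: a function satisfying the classical
axioms (normalization, additivity, homotopy invariance, dependence on boundary
values only), which uniquely characterize the topological degree. -/
structure DegreeTheory (N : ℕ) where
  deg : (EN N → EN N) → Set (EN N) → EN N → ℤ
  normalization : ∀ U : Set (EN N), IsOpen U → IsBounded U → ∀ ξ ∈ U, deg id U ξ = 1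
  boundary_dep : ∀ (y₁ y₂ : EN N → EN N) (U : Set (EN N)),
      EqOn y₁ y₂ (frontier U) → deg y₁ U = deg y₂ U
  additivity : ∀ (y : EN N → EN N) (U U₁ U₂ : Set (EN N)), IsOpen U → IsBounded U →
      IsOpen U₁ → IsOpen U₂ → U₁ ⊆ U → U₂ ⊆ U → Disjoint U₁ U₂ →
      ContinuousOn y (closure U) → ∀ ξ ∉ y '' (closure U \ (U₁ ∪ U₂)),
        deg y U ξ = deg y U₁ ξ + deg y U₂ ξ
  homotopy : ∀ (H : ℝ → EN N → EN N) (U : Set (EN N)), IsOpen U → IsBounded U →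
      ContinuousOn (fun q : ℝ × EN N => H q.1 q.2) (Icc (0:ℝ) 1 ×ˢ frontier U) →
      ∀ ξ : EN N, (∀ t ∈ Icc (0:ℝ) 1, ξ ∉ H t '' frontier U) →
        deg (H 0) U ξ = deg (H 1) U ξ

/-- Topological image of an open set under a map which is continuous
on the frontier of `U`. -/
def imTloc (DT : DegreeTheory N) (y : EN N → EN N) (U : Set (EN N)) : Set (EN N) :=
  {ξ | ξ ∉ y '' frontier U ∧ DT.deg y U ξ ≠ 0}

/-- The surface measure: (N-1)-dimensional Hausdorff measure. -/
def surf (N : ℕ) : Measure (EN N) := μH[(N : ℝ) - 1]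

/-- Topological image of `U` under a Sobolev map `y`, computed through the
continuous representative of the restriction of `y` to the boundary of `U`. -/
def imTS (DT : DegreeTheory N) (y : EN N → EN N) (U : Set (EN N)) : Set (EN N) :=
  {ξ | ∃ yc : EN N → EN N, ContinuousOn yc (frontier U) ∧
        (∀ᵐ x ∂((surf N).restrict (frontier U)), yc x = y x) ∧
        ξ ∉ yc '' frontier U ∧ DT.deg yc U ξ ≠ 0}

/-- A bounded domain of class `C²`. -/
def IsC2Domain (U : Set (EN N)) : Prop :=
  IsOpen U ∧ IsBounded U ∧ IsConnected U ∧
  ∀ x ∈ frontier U, ∃ f : EN N → ℝ, ContDiff ℝ 2 f ∧ fderiv ℝ f x ≠ 0 ∧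
    ∃ ε > (0:ℝ), ∀ z ∈ ball x ε, ((z ∈ U ↔ 0 < f z) ∧ (z ∈ frontier U ↔ f z = 0))

/-- The class `U_y` of regular subdomains of a deformation. -/
def RegSub (Ω : Set (EN N)) {p : ℝ} (d : SobolevFn N Ω p) (U : Set (EN N)) : Prop :=
  IsC2Domain U ∧ closure U ⊆ Ω ∧
  (∃ yc : EN N → EN N, ContinuousOn yc (frontier U) ∧
      (∀ᵐ x ∂((surf N).restrict (frontier U)), yc x = d.y x) ∧
      volume (yc '' frontier U) = 0) ∧
  IntegrableOn (fun x => mnorm ((d.D x).adjugate)) (frontier U) (surf N)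

/-- The singularity set `S_y`. -/
def Sy (DT : DegreeTheory N) (Ω : Set (EN N)) {p : ℝ} (d : SobolevFn N Ω p) : Set (EN N) :=
  {x ∈ Ω | ∃ c : ℝ, 0 < c ∧ ∀ δ > (0:ℝ), ∃ r ∈ Ioo (0:ℝ) δ,
      RegSub Ω d (ball x r) ∧ c ≤ diam (imTS DT d.y (ball x r))}

/-- The class `U_y^*` of regular subdomains avoiding the singularity set. -/
def UyStar (DT : DegreeTheory N) (Ω : Set (EN N)) {p : ℝ} (d : SobolevFn N Ω p) :
    Set (Set (EN N)) :=
  {U | RegSub Ω d U ∧ frontier U ∩ Sy DT Ω d = ∅}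

/-- The topological image `im_T(y,Ω)` of `Ω` under `y`. -/
def imTOmega (DT : DegreeTheory N) (Ω : Set (EN N)) {p : ℝ} (d : SobolevFn N Ω p) :
    Set (EN N) :=
  ⋃ U ∈ UyStar DT Ω d, imTS DT d.y U

/-- An admissible magnetoelastic state: the class `Q`. -/
structure MagState (N : ℕ) (Ω : Set (EN N)) (p : ℝ) (DT : DegreeTheory N) where
  def_ : SobolevFn N Ω p
  adm : IsAdmissible Ω def_
  m : EN N → EN N
  Dm : EN N → Mat N
  mem_m : ∀ i, MemLp ((imTOmega DT Ω def_).indicator fun x => m x i) 2 volume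
  mem_Dm : ∀ i j, MemLp ((imTOmega DT Ω def_).indicator fun x => Dm x i j) 2 volume
  weak_m : HasWeakDeriv (imTOmega DT Ω def_) m Dm
  saturation : ∀ᵐ x ∂(volume.restrict Ω), ‖m (def_.y x)‖ * (def_.D x).det = 1

/-- Membership in `Q^inj`: the underlying deformation is a.e. injective. -/
def MagState.inj {Ω : Set (EN N)} {p : ℝ} {DT : DegreeTheory N}
    (q : MagState N Ω p DT) : Prop :=
  AEInjOn q.def_.y Ω

/-- Weak convergence in `L^p`, expressed through pairings against functions in the
dual Lebesgue space of exponent `q`. -/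
def WeakConv {α : Type*} [MeasurableSpace α] (μ : Measure α) (q : ℝ≥0∞)
    (f : ℕ → α → ℝ) (g : α → ℝ) : Prop :=
  ∀ φ : α → ℝ, MemLp φ q μ →
    Tendsto (fun n => ∫ x, f n x * φ x ∂μ) atTop (𝓝 (∫ x, g x * φ x ∂μ))

/-- The conjugate exponent `p' = p/(p-1)` as an extended real. -/
def conjExp (p : ℝ) : ℝ≥0∞ := ENNReal.ofReal (p / (p - 1))

/-- Weak convergence in `W^{1,p}(Ω;ℝ^N)`. -/
def WeakW1p (Ω : Set (EN N)) (p : ℝ) (dn : ℕ → SobolevFn N Ω p) (d : SobolevFn N Ω p) :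
    Prop :=
  (∀ i, WeakConv (volume.restrict Ω) (conjExp p) (fun n x => (dn n).y x i)
      (fun x => d.y x i)) ∧
  (∀ i j, WeakConv (volume.restrict Ω) (conjExp p) (fun n x => (dn n).D x i j)
      (fun x => d.D x i j))

/-- Strong convergence in `L^q`. -/
def StrongLp {α : Type*} [MeasurableSpace α] {β : Type*} [NormedAddCommGroup β]
    (μ : Measure α) (q : ℝ≥0∞) (f : ℕ → α → β) (g : α → β) : Prop :=
  Tendsto (fun n => eLpNorm (fun x => f n x - g x) q μ) atTop (𝓝 0)

/-- Almost everywhere convergence. -/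
def AEConv {α : Type*} [MeasurableSpace α] {β : Type*} [TopologicalSpace β]
    (μ : Measure α) (f : ℕ → α → β) (g : α → β) : Prop :=
  ∀ᵐ x ∂μ, Tendsto (fun n => f n x) atTop (𝓝 (g x))
/-- The vector of all minors of order `1, …, N-1` of a matrix. -/
def MinorsVec (N : ℕ) : Type :=
  (k : Fin (N - 1)) → (Fin (k.1 + 1) → Fin N) → (Fin (k.1 + 1) → Fin N) → ℝ

instance : AddCommGroup (MinorsVec N) := by unfold MinorsVec; infer_instance
instance : Module ℝ (MinorsVec N) := by unfold MinorsVec; infer_instance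
instance : TopologicalSpace (MinorsVec N) := by unfold MinorsVec; infer_instance

/-- All minors of order `≤ N-1` of a matrix. -/
def minorsOf (F : Mat N) : MinorsVec N :=
  fun _ f g => (Matrix.of fun i j => F (f i) (g j)).det

/-- Coercivity of the elastic energy density. -/
def Coercive (p : ℝ) (W : Mat N → EN N → ℝ) (C : ℝ) (γ : ℝ → ℝ) : Prop :=
  0 < C ∧ (∀ h : ℝ, 0 < h → 0 < γ h) ∧ Measurable γ ∧
  Tendsto (fun h : ℝ => h * γ h) (𝓝[>] 0) atTop ∧
  Tendsto (fun h : ℝ => γ h / h) atTop atTop ∧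
  ∀ F : Mat N, 0 < F.det → ∀ lam : EN N, C * mnorm F ^ p + γ F.det ≤ W F lam

/-- Partial polyconvexity of the elastic energy density. -/
def PartialPolyconvex (W : Mat N → EN N → ℝ) : Prop :=
  ∃ What : MinorsVec N → ℝ → EN N → ℝ,
    ContinuousOn (fun z : MinorsVec N × ℝ × EN N => What z.1 z.2.1 z.2.2)
      {z | 0 < z.2.1 ∧ z.2.2 ≠ 0} ∧
    (∀ z : MinorsVec N × ℝ × EN N, 0 < z.2.1 → z.2.2 ≠ 0 → 0 ≤ What z.1 z.2.1 z.2.2) ∧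
    (∀ h : ℝ, 0 < h → ∀ lam : EN N, lam ≠ 0 →
        ConvexOn ℝ univ (fun v : MinorsVec N => What v h lam)) ∧
    ∀ F : Mat N, 0 < F.det → ∀ lam : EN N, lam ≠ 0 → ‖lam‖ * F.det = 1 →
      W F lam = What (minorsOf F) F.det lam

variable {Ω : Set (EN N)} {p : ℝ} {DT : DegreeTheory N}

/-- The elastic energy of a state. -/
def elasticE (Ω : Set (EN N)) (W : Mat N → EN N → ℝ) (q : MagState N Ω p DT) : ℝ :=
  ∫ x in Ω, W (q.def_.D x) (q.m (q.def_.y x))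

/-- The exchange energy of a state. -/
def exchangeE (q : MagState N Ω p DT) : ℝ :=
  ∫ ξ in imTOmega DT Ω q.def_, mnorm2 (q.Dm ξ)

/-- `G` is the (gradient of a) weak solution of the Maxwell equation for the
magnetization `m` supported on `A`. -/
def IsStrayField (A : Set (EN N)) (m : EN N → EN N) (G : EN N → EN N) : Prop :=
  (∀ j, MemLp (fun x => G x j) 2 (volume : Measure (EN N))) ∧
  (∃ u : EN N → ℝ, (∀ K : Set (EN N), IsCompact K → IntegrableOn u K volume) ∧
      HasWeakDerivScalar univ u G) ∧
  ∀ φ : EN N → ℝ, ContDiff ℝ (⊤ : ℕ∞) φ → HasCompactSupport φ →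
    ∫ x, (∑ j, (-(G x j) - (A.indicator m x) j) * pder φ x j) = 0

/-- The magnetostatic energy of a state. -/
def magE (q : MagState N Ω p DT) : ℝ :=
  sInf {c : ℝ | ∃ G : EN N → EN N, IsStrayField (imTOmega DT Ω q.def_) q.m G ∧
    c = (1 / 2) * ∫ x, ‖G x‖ ^ 2}

/-- The magnetoelastic energy `E`. -/
def energyE (Ω : Set (EN N)) (W : Mat N → EN N → ℝ) (q : MagState N Ω p DT) : ℝ :=
  elasticE Ω W q + exchangeE q + magE q

/-- An abstract trace operator on `Γ ⊆ ∂Ω`; the stated properties (agreement with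
boundary values of continuous maps, independence of the a.e. representative, and
continuity along weakly converging sequences in `W^{1,p}`) characterize the trace. -/
structure TraceOp (N : ℕ) (Ω : Set (EN N)) (p : ℝ) where
  tr : (EN N → EN N) → (EN N → EN N)
  agrees : ∀ y : EN N → EN N, ContinuousOn y (closure Ω) →
      ∀ᵐ x ∂((surf N).restrict (frontier Ω)), tr y x = y x
  respects_ae : ∀ y₁ y₂ : EN N → EN N,
      (∀ᵐ x ∂(volume.restrict Ω), y₁ x = y₂ x) → tr y₁ = tr y₂
  weak_cont : ∀ (dn : ℕ → SobolevFn N Ω p) (d : SobolevFn N Ω p), WeakW1p Ω p dn d →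
      Tendsto (fun n => eLpNorm (fun x => tr (dn n).y x - tr d.y x)
        (ENNReal.ofReal p) ((surf N).restrict (frontier Ω))) atTop (𝓝 0)

/-- The work of the applied loads. -/
def loadE (Tr : TraceOp N Ω p) (Sg : Set (EN N))
    (f g h : EN N → EN N) (q : MagState N Ω p DT) : ℝ :=
  (∫ x in Ω, ∑ j, f x j * q.def_.y x j) +
  (∫ x in Sg, ∑ j, g x j * Tr.tr q.def_.y x j ∂(surf N)) +
  (∫ ξ in imTOmega DT Ω q.def_, ∑ j, h ξ j * q.m ξ j)

/-- The relaxed Dirichlet boundary term. -/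
def bdryE (p : ℝ) {DT : DegreeTheory N} (Tr : TraceOp N Ω p) (Γ : Set (EN N))
    (dbc : EN N → EN N) (q : MagState N Ω p DT) : ℝ :=
  ∫ x in Γ, ‖dbc x - Tr.tr q.def_.y x‖ ^ p ∂(surf N)

/-- The total energy `F(t,q)` of the quasistatic model. -/
def totalF (W : Mat N → EN N → ℝ) (Tr : TraceOp N Ω p) (Γ Sg : Set (EN N))
    (d f g h : ℝ → EN N → EN N) (t : ℝ) (q : MagState N Ω p DT) : ℝ :=
  energyE Ω W q - loadE Tr Sg (f t) (g t) (h t) q + bdryE p Tr Γ (d t) q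

/-- The dissipation distance `D`. -/
def Diss (Ω : Set (EN N)) {p : ℝ} {DT : DegreeTheory N}
    (q q' : MagState N Ω p DT) : ℝ :=
  ∫ x in Ω, ‖(q.def_.D x).det • q.m (q.def_.y x) -
      (q'.def_.D x).det • q'.m (q'.def_.y x)‖

/-- The `D`-variation of a trajectory on `[a,b]`. -/
def VarD (Ω : Set (EN N)) {p : ℝ} {DT : DegreeTheory N}
    (q : ℝ → MagState N Ω p DT) (a b : ℝ) : ℝ≥0∞ :=
  ⨆ (l : ℕ) (t : Fin (l + 1) → ℝ) (_ : StrictMono t) (_ : t 0 = a)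
      (_ : t (Fin.last l) = b),
    ∑ i : Fin l, ENNReal.ofReal (Diss Ω (q (t i.castSucc)) (q (t i.succ)))

/-- Absolute continuity in time with values in `L^r(μ)` (vector valued). -/
def ACinLp (T : ℝ) {α : Type*} [MeasurableSpace α] (μ : Measure α) (r : ℝ≥0∞)
    (u : ℝ → α → EN N) : Prop :=
  (∀ t ∈ Icc (0:ℝ) T, ∀ j, MemLp (fun x => u t x j) r μ) ∧
  ∀ ε > (0:ℝ), ∃ δ > (0:ℝ), ∀ (n : ℕ) (a b : Fin n → ℝ),
    (∀ i, 0 ≤ a i ∧ a i ≤ b i ∧ b i ≤ T) →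
    (∀ i j, i ≠ j → Disjoint (Ioc (a i) (b i)) (Ioc (a j) (b j))) →
    (∑ i, (b i - a i)) < δ →
    ∑ i, (eLpNorm (fun x => u (b i) x - u (a i) x) r μ).toReal < ε
/-- `x₀` is a Lebesgue point of `y`. -/
def IsLebesguePoint (y : EN N → EN N) (x₀ : EN N) : Prop :=
  ∃ v : EN N, Tendsto (fun r : ℝ => ⨍ x in ball x₀ r, ‖y x - v‖ ∂volume) (𝓝[>] 0) (𝓝 0)

/-- The set `S` has `N`-dimensional density one at `x₀`. -/
def DensityOneAt (S : Set (EN N)) (x₀ : EN N) : Prop :=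
  Tendsto (fun r : ℝ => volume (S ∩ ball x₀ r) / volume (ball x₀ r)) (𝓝[>] 0) (𝓝 1)

/-- The set `R ⊆ ℝ` has right one-dimensional density one at `x₀`. -/
def RightDensityOneAt (R : Set ℝ) (x₀ : ℝ) : Prop :=
  Tendsto (fun r : ℝ => volume (R ∩ Ioo x₀ (x₀ + r)) / ENNReal.ofReal r) (𝓝[>] 0) (𝓝 1)

/-- `y` is approximately differentiable at `x₀` with approximate gradient `A`. -/
def ApproxDiffAt (y : EN N → EN N) (x₀ : EN N) (A : Mat N) : Prop :=
  ∀ ε > (0:ℝ),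
    DensityOneAt {x | ‖y x - y x₀ - mvec A (x - x₀)‖ ≤ ε * ‖x - x₀‖} x₀

/-- Essential supremum (w.r.t. `H^{N-1}`) over the sphere of radius `r` of the
normalized linearization error. -/
def sphEss (y : EN N → EN N) (x₀ : EN N) (A : Mat N) (r : ℝ) : ℝ≥0∞ :=
  essSup (fun x => ENNReal.ofReal (‖y x - y x₀ - mvec A (x - x₀)‖ / ‖x - x₀‖))
    ((surf N).restrict (sphere x₀ r))

/-- `y` is regularly approximately differentiable at `x₀ ∈ Ω` with regular
approximate gradient `A`. -/
def RegApproxDiffAt (Ω : Set (EN N)) (y : EN N → EN N) (x₀ : EN N) (A : Mat N) : Prop :=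
  ∃ R : Set ℝ, MeasurableSet R ∧ R ⊆ Ioo 0 (infDist x₀ Ωᶜ) ∧ RightDensityOneAt R 0 ∧
    Tendsto (fun r => sphEss y x₀ A r) (𝓝[R] (0:ℝ)) (𝓝 0)

/-- Membership in the geometric domain `dom_G(y,Ω)`, relative to the
(approximate) gradient field `G`. -/
def MemDomG (Ω : Set (EN N)) (y : EN N → EN N) (G : EN N → Mat N) (x₀ : EN N) : Prop :=
  x₀ ∈ Ω ∧ ApproxDiffAt y x₀ (G x₀) ∧ (G x₀).det ≠ 0 ∧
  ∃ K : Set (EN N), IsCompact K ∧ K ⊆ Ω ∧ x₀ ∈ K ∧ DensityOneAt K x₀ ∧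
    ∃ w : EN N → EN N, ContDiff ℝ 1 w ∧ EqOn y w K ∧
      ∀ x ∈ K, ∀ i j, fderiv ℝ w x (EuclideanSpace.single j 1) i = G x i j

/-- The geometric domain `dom_G(y,A)`. -/
def domG (Ω : Set (EN N)) (y : EN N → EN N) (G : EN N → Mat N) (A : Set (EN N)) :
    Set (EN N) :=
  {x ∈ A | MemDomG Ω y G x}

/-- The geometric image `im_G(y,A)`. -/
def imG (Ω : Set (EN N)) (y : EN N → EN N) (G : EN N → Mat N) (A : Set (EN N)) :
    Set (EN N) :=
  y '' domG Ω y G A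

/-- The multiplicity function `mult(y,A,ξ)`. -/
def multFn (Ω : Set (EN N)) (y : EN N → EN N) (G : EN N → Mat N) (A : Set (EN N))
    (ξ : EN N) : ℕ :=
  Set.ncard {x ∈ domG Ω y G A | y x = ξ}

/-- A local inverse of `y` on the regular subdomain `U`: any map that inverts `y`
on `im_T(y,U) ∩ im_G(y,U)` through the geometric domain. -/
def IsLocalInverse (DT : DegreeTheory N) (Ω : Set (EN N)) (y : EN N → EN N)
    (G : EN N → Mat N) (U : Set (EN N)) (g : EN N → EN N) : Prop :=
  ∀ ξ ∈ imTS DT y U ∩ imG Ω y G U, g ξ ∈ domG Ω y G U ∧ y (g ξ) = ξ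

open Classical in
/-- Signed distance to the boundary of `U` (positive inside). -/
def sdist (U : Set (EN N)) (x : EN N) : ℝ :=
  if x ∈ U then infDist x Uᶜ else -infDist x U

/-- The inner parallel set `U_ℓ`. -/
def parSet (U : Set (EN N)) (ℓ : ℝ) : Set (EN N) := {x | ℓ < sdist U x}

/-- Outer unit normal field of `∂U`, through the signed distance. -/
def nvec (U : Set (EN N)) (x : EN N) : EN N :=
  toE fun j => -(fderiv ℝ (sdist U) x (EuclideanSpace.single j 1))

/-- Orthogonal projection onto the tangent space of `∂U` at `x`. -/
def tproj (U : Set (EN N)) (x : EN N) (v : EN N) : EN N :=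
  v - (inner ℝ v (nvec U x) : ℝ) • nvec U x

/-- Tangential divergence of a smooth vector field along `∂U`. -/
def tdiv (U : Set (EN N)) (Φ : EN N → EN N) (x : EN N) : ℝ :=
  ∑ i, (fderiv ℝ Φ x (tproj U x (EuclideanSpace.single i 1))) i

/-- Scalar mean curvature of `∂U`. -/
def Hcurv (U : Set (EN N)) (x : EN N) : ℝ := tdiv U (nvec U) x

/-- `y` belongs to `W^{1,p}(∂U';ℝ^N)` with weak tangential gradient `G`
(defined via the integration-by-parts formula on the boundary). -/
def MemW1pSurface (U' : Set (EN N)) (p : ℝ) (y : EN N → EN N) (G : EN N → Mat N) :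
    Prop :=
  (∀ i, MemLp (fun x => y x i) (ENNReal.ofReal p) ((surf N).restrict (frontier U'))) ∧
  (∀ i j, MemLp (fun x => G x i j) (ENNReal.ofReal p)
      ((surf N).restrict (frontier U'))) ∧
  ∀ Φ : EN N → EN N, ContDiff ℝ (⊤ : ℕ∞) Φ → HasCompactSupport Φ → ∀ i,
    -(∫ x in frontier U', y x i * tdiv U' Φ x ∂(surf N))
      = (∫ x in frontier U', (∑ j, G x i j * Φ x j) ∂(surf N))
        - ∫ x in frontier U', (inner ℝ (Φ x) (nvec U' x) : ℝ) * y x i * Hcurv U' x ∂(surf N)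
/-- The Eulerian magnetization extended by zero: `χ_{im_T(y,Ω)} m`. -/
def chiM (DT : DegreeTheory N) (Ω : Set (EN N)) {p : ℝ} (q : MagState N Ω p DT) :
    EN N → EN N :=
  (imTOmega DT Ω q.def_).indicator q.m

/-- An entry of `χ_{im_T(y,Ω)} Dm`. -/
def chiDm (DT : DegreeTheory N) (Ω : Set (EN N)) {p : ℝ} (q : MagState N Ω p DT)
    (i j : Fin N) : EN N → ℝ :=
  (imTOmega DT Ω q.def_).indicator fun x => q.Dm x i j

/-- The Lagrangian composition `m ∘ y`. -/
def compMY {Ω : Set (EN N)} {p : ℝ} {DT : DegreeTheory N} (q : MagState N Ω p DT) :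
    EN N → EN N :=
  fun x => q.m (q.def_.y x)

/-- The dissipative variable `(m ∘ y) det Dy`. -/
def magComp {Ω : Set (EN N)} {p : ℝ} {DT : DegreeTheory N} (q : MagState N Ω p DT) :
    EN N → EN N :=
  fun x => (q.def_.D x).det • q.m (q.def_.y x)

/-- The Jacobian determinant `det Dy`. -/
def detD {Ω : Set (EN N)} {p : ℝ} {DT : DegreeTheory N} (q : MagState N Ω p DT) :
    EN N → ℝ :=
  fun x => (q.def_.D x).det

/-- The full list of convergences, along the subsequence `φ`, provided by the
compactness theorem. -/
def CompConcl (Ω : Set (EN N)) (p : ℝ) (DT : DegreeTheory N)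
    (qn : ℕ → MagState N Ω p DT) (q : MagState N Ω p DT) (φ : ℕ → ℕ) : Prop :=
  -- `y_n ⇀ y` in `W^{1,p}(Ω;ℝ^N)`
  WeakW1p Ω p (fun k => (qn (φ k)).def_) q.def_ ∧
  -- `χ m_n ⇀ χ m` in `L²(ℝ^N;ℝ^N)`
  (∀ i, WeakConv volume 2 (fun k x => chiM DT Ω (qn (φ k)) x i)
      (fun x => chiM DT Ω q x i)) ∧
  -- `χ Dm_n ⇀ χ Dm` in `L²(ℝ^N;ℝ^{N×N})`
  (∀ i j, WeakConv volume 2 (fun k => chiDm DT Ω (qn (φ k)) i j) (chiDm DT Ω q i j)) ∧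
  -- `m_n ∘ y_n → m ∘ y` a.e. in `Ω` and in `L¹(Ω;ℝ^N)`
  AEConv (volume.restrict Ω) (fun k => compMY (qn (φ k))) (compMY q) ∧
  StrongLp (volume.restrict Ω) 1 (fun k => compMY (qn (φ k))) (compMY q) ∧
  -- `det Dy_n → det Dy` and `1/det Dy_n → 1/det Dy` in `L¹(Ω)`
  StrongLp (volume.restrict Ω) 1 (fun k => detD (qn (φ k))) (detD q) ∧
  StrongLp (volume.restrict Ω) 1 (fun k x => (detD (qn (φ k)) x)⁻¹)
      (fun x => (detD q x)⁻¹) ∧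
  -- `(m_n ∘ y_n) det Dy_n → (m ∘ y) det Dy` in every `L^r(Ω;ℝ^N)`, `1 ≤ r < ∞`
  (∀ r : ℝ, 1 ≤ r → StrongLp (volume.restrict Ω) (ENNReal.ofReal r)
      (fun k => magComp (qn (φ k))) (magComp q)) ∧
  -- `χ m_n → χ m` a.e. in `ℝ^N` and in `L^r(ℝ^N;ℝ^N)` for `1 ≤ r < 2`
  AEConv volume (fun k => chiM DT Ω (qn (φ k))) (chiM DT Ω q) ∧
  (∀ r : ℝ, 1 ≤ r → r < 2 → StrongLp volume (ENNReal.ofReal r)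
      (fun k => chiM DT Ω (qn (φ k))) (chiM DT Ω q))

section StabilityAux

variable {N : ℕ}

private lemma aux_exists_big_norm (hN : 2 ≤ N) (r : ℝ) : ∃ v : EN N, r < ‖v‖ := by
  refine ⟨EuclideanSpace.single ⟨0, by omega⟩ (|r| + 1), ?_⟩
  rw [EuclideanSpace.norm_single, Real.norm_eq_abs, abs_of_nonneg (by positivity)]
  linarith [le_abs_self r]

private lemma aux_not_bounded_univ (hN : 2 ≤ N) : ¬ IsBounded (univ : Set (EN N)) := by
  intro h
  obtain ⟨C, hC⟩ := isBounded_iff_forall_norm_le.mp h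
  obtain ⟨v, hv⟩ := aux_exists_big_norm hN C
  exact absurd (hC v (mem_univ v)) (not_le.mpr hv)

private lemma aux_empty_of_frontier (hN : 2 ≤ N) {U : Set (EN N)} (hUb : IsBounded U)
    (hfr : frontier U = ∅) : U = ∅ := by
  rcases isClopen_iff.mp (isClopen_iff_frontier_eq_empty.mpr hfr) with h | h
  · exact h
  · exact absurd (h ▸ hUb) (aux_not_bounded_univ hN)

private lemma deg_empty (DT : DegreeTheory N) (y : EN N → EN N) (ξ : EN N) :
    DT.deg y ∅ ξ = 0 := by
  have h := DT.additivity y ∅ ∅ ∅ isOpen_empty Bornology.isBounded_empty isOpen_empty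
    isOpen_empty (empty_subset _) (empty_subset _) (by simp)
    (by rw [closure_empty]; exact continuousOn_empty y) ξ (by simp)
  omega

private lemma deg_zero_of_not_mem (DT : DegreeTheory N) {U : Set (EN N)} {y : EN N → EN N}
    {ξ : EN N} (hUo : IsOpen U) (hUb : IsBounded U) (hy : ContinuousOn y (closure U))
    (hξ : ξ ∉ y '' closure U) : DT.deg y U ξ = 0 := by
  have h := DT.additivity y U ∅ ∅ hUo hUb isOpen_empty isOpen_empty (empty_subset _)
    (empty_subset _) (by simp) hy ξ (by simpa using hξ)
  rw [deg_empty] at h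
  omega

private lemma deg_homotopy_segment (DT : DegreeTheory N) {U : Set (EN N)}
    (hUo : IsOpen U) (hUb : IsBounded U) {y z : EN N → EN N}
    (hy : ContinuousOn y (frontier U)) (hz : ContinuousOn z (frontier U)) {ξ : EN N}
    (h : ∀ x ∈ frontier U, ∀ t : ℝ, t ∈ Icc (0:ℝ) 1 → ξ ≠ y x + t • (z x - y x)) :
    DT.deg z U ξ = DT.deg y U ξ := by
  set H : ℝ → EN N → EN N := fun t x => y x + t • (z x - y x) with hH
  have hys : ContinuousOn (fun q : ℝ × EN N => y q.2) (Icc (0:ℝ) 1 ×ˢ frontier U) :=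
    hy.comp continuous_snd.continuousOn (fun q hq => hq.2)
  have hzs : ContinuousOn (fun q : ℝ × EN N => z q.2) (Icc (0:ℝ) 1 ×ˢ frontier U) :=
    hz.comp continuous_snd.continuousOn (fun q hq => hq.2)
  have hcont : ContinuousOn (fun q : ℝ × EN N => H q.1 q.2) (Icc (0:ℝ) 1 ×ˢ frontier U) :=
    hys.add ((continuous_fst.continuousOn).smul (hzs.sub hys))
  have havoid : ∀ t ∈ Icc (0:ℝ) 1, ξ ∉ H t '' frontier U := by
    rintro t ht ⟨x, hx, hξx⟩
    exact h x hx t ht hξx.symm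
  have hdeg := DT.homotopy H U hUo hUb hcont ξ havoid
  have h0 : DT.deg (H 0) U = DT.deg y U :=
    DT.boundary_dep _ _ _ (fun x _ => by simp [hH])
  have h1 : DT.deg (H 1) U = DT.deg z U :=
    DT.boundary_dep _ _ _ (fun x _ => by
      show y x + (1:ℝ) • (z x - y x) = z x
      rw [one_smul]; abel)
  calc DT.deg z U ξ = DT.deg (H 1) U ξ := (congrFun h1 ξ).symm
    _ = DT.deg (H 0) U ξ := hdeg.symm
    _ = DT.deg y U ξ := congrFun h0 ξ

private lemma deg_zero_of_ball (hN : 2 ≤ N) (DT : DegreeTheory N) {U : Set (EN N)}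
    (hUo : IsOpen U) (hUb : IsBounded U) {y : EN N → EN N}
    (hy : ContinuousOn y (frontier U)) {c : EN N} {s : ℝ} {ξ : EN N}
    (him : ∀ x ∈ frontier U, y x ∈ ball c s) (hξ : ξ ∉ ball c s) :
    DT.deg y U ξ = 0 := by
  rcases eq_empty_or_nonempty (frontier U) with hfr | ⟨x₀, hx₀⟩
  · rw [aux_empty_of_frontier hN hUb hfr]; exact deg_empty DT y ξ
  · have hs : 0 < s := nonempty_ball.mp ⟨y x₀, him x₀ hx₀⟩
    have hstep : DT.deg (fun _ => c) U ξ = DT.deg y U ξ := by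
      apply deg_homotopy_segment DT hUo hUb hy continuousOn_const
      intro x hx t ht heq
      apply hξ
      rw [heq, mem_ball, dist_eq_norm]
      have hcalc : y x + t • (c - y x) - c = (1 - t) • (y x - c) := by
        module
      rw [hcalc, norm_smul, Real.norm_eq_abs]
      have h1 : |1 - t| * ‖y x - c‖ ≤ 1 * ‖y x - c‖ := by
        apply mul_le_mul_of_nonneg_right _ (norm_nonneg _)
        rw [abs_of_nonneg (by linarith [ht.2])]; linarith [ht.1]
      have h2 : ‖y x - c‖ < s := by
        rw [← dist_eq_norm]; exact mem_ball.mp (him x hx)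
      calc |1 - t| * ‖y x - c‖ ≤ 1 * ‖y x - c‖ := h1
        _ = ‖y x - c‖ := one_mul _
        _ < s := h2
    rw [← hstep]
    apply deg_zero_of_not_mem DT hUo hUb continuousOn_const
    rintro ⟨x, hx, hcx⟩
    exact hξ (hcx ▸ mem_ball_self hs)

private lemma deg_perturb (DT : DegreeTheory N) {U : Set (EN N)}
    (hUo : IsOpen U) (hUb : IsBounded U) {y z : EN N → EN N}
    (hy : ContinuousOn y (frontier U)) (hz : ContinuousOn z (frontier U)) {ξ : EN N}
    (h : ∀ x ∈ frontier U, dist (z x) (y x) < dist ξ (y x)) :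
    DT.deg z U ξ = DT.deg y U ξ ∧ ξ ∉ z '' frontier U := by
  constructor
  · apply deg_homotopy_segment DT hUo hUb hy hz
    intro x hx t ht heq
    have h1 : dist ξ (y x) = |t| * ‖z x - y x‖ := by
      rw [dist_eq_norm, heq]
      have hcalc : y x + t • (z x - y x) - y x = t • (z x - y x) := by abel
      rw [hcalc, norm_smul, Real.norm_eq_abs]
    have h2 : |t| ≤ 1 := abs_le.mpr ⟨by linarith [ht.1], ht.2⟩
    have h3 := h x hx
    rw [dist_eq_norm] at h3
    nlinarith [norm_nonneg (z x - y x), abs_nonneg t]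
  · rintro ⟨x, hx, hzx⟩
    have h4 := h x hx
    rw [hzx] at h4
    exact lt_irrefl _ h4

private lemma deg_zero_of_connected_compl (hN : 2 ≤ N) (DT : DegreeTheory N)
    {U O : Set (EN N)} (hUo : IsOpen U) (hUb : IsBounded U) {y : EN N → EN N}
    (hy : ContinuousOn y (frontier U)) (hOb : IsBounded O) (hOc : IsConnected Oᶜ)
    (him : y '' frontier U ⊆ O) {ξ : EN N} (hξ : ξ ∉ O) :
    DT.deg y U ξ = 0 := by
  have hfrc : IsCompact (frontier U) :=
    hUb.isCompact_closure.of_isClosed_subset isClosed_frontier frontier_subset_closure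
  have hTc : IsCompact (y '' frontier U) := hfrc.image_of_continuousOn hy
  set S : Set (EN N) := (y '' frontier U)ᶜ with hS
  have hSo : IsOpen S := hTc.isClosed.isOpen_compl
  have hξS : ξ ∈ S := fun hmem => hξ (him hmem)
  set C := connectedComponentIn S ξ with hC
  have hOcC : Oᶜ ⊆ C :=
    hOc.isPreconnected.subset_connectedComponentIn hξ (compl_subset_compl.mpr him)
  obtain ⟨R, hR0, hRb⟩ : ∃ R : ℝ, 0 < R ∧ ∀ x ∈ frontier U, y x ∈ ball (0:EN N) R := by
    obtain ⟨R₀, hR₀⟩ := isBounded_iff_forall_norm_le.mp hTc.isBounded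
    refine ⟨|R₀| + 1, by positivity, fun x hx => ?_⟩
    rw [mem_ball, dist_eq_norm, sub_zero]
    have hbound := hR₀ _ (mem_image_of_mem y hx)
    linarith [le_abs_self R₀]
  have hCunb : ¬ IsBounded C := by
    intro hb
    apply aux_not_bounded_univ hN
    have huniv : (univ : Set (EN N)) = O ∪ Oᶜ := (union_compl_self O).symm
    rw [huniv]
    exact hOb.union (hb.subset hOcC)
  obtain ⟨p, hpC, hpR⟩ : ∃ p ∈ C, R < ‖p‖ := by
    by_contra hcon
    push_neg at hcon
    exact hCunb (isBounded_iff_forall_norm_le.mpr ⟨R, fun x hx => hcon x hx⟩)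
  have hCpc : IsPathConnected C :=
    ((hSo.connectedComponentIn).isConnected_iff_isPathConnected).mp
      (isConnected_connectedComponentIn_iff.mpr hξS)
  obtain ⟨γ, hγ⟩ := hCpc.joinedIn ξ (mem_connectedComponentIn hξS) p hpC
  set H : ℝ → EN N → EN N := fun t x => y x + (ξ - γ.extend t) with hH
  have hcont : ContinuousOn (fun q : ℝ × EN N => H q.1 q.2) (Icc (0:ℝ) 1 ×ˢ frontier U) := by
    have hys : ContinuousOn (fun q : ℝ × EN N => y q.2) (Icc (0:ℝ) 1 ×ˢ frontier U) :=
      hy.comp continuous_snd.continuousOn (fun q hq => hq.2)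
    exact hys.add (continuousOn_const.sub
      ((γ.continuous_extend.comp continuous_fst).continuousOn))
  have havoid : ∀ t ∈ Icc (0:ℝ) 1, ξ ∉ H t '' frontier U := by
    rintro t ht ⟨x, hx, hξx⟩
    have hmemC : γ.extend t ∈ C := by
      rw [γ.extend_apply ht]; exact hγ _
    have heq2 : ξ - γ.extend t = ξ - y x := by
      have h' : y x + (ξ - γ.extend t) = ξ := hξx
      have := eq_sub_of_add_eq' h'
      rw [this]
    have hyx : γ.extend t = y x := sub_right_inj.mp heq2
    exact (connectedComponentIn_subset S ξ) hmemC (hyx ▸ mem_image_of_mem y hx)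
  have hdeg := DT.homotopy H U hUo hUb hcont ξ havoid
  have h0 : DT.deg (H 0) U = DT.deg y U :=
    DT.boundary_dep _ _ _ (fun x _ => by
      show y x + (ξ - γ.extend 0) = y x
      rw [γ.extend_zero]; simp)
  have h1 : DT.deg (H 1) U = DT.deg (fun x => y x + (ξ - p)) U :=
    DT.boundary_dep _ _ _ (fun x _ => by
      show y x + (ξ - γ.extend 1) = y x + (ξ - p)
      rw [γ.extend_one])
  have hzero : DT.deg (fun x => y x + (ξ - p)) U ξ = 0 := by
    apply deg_zero_of_ball hN DT hUo hUb (hy.add continuousOn_const)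
      (c := ξ - p) (s := R)
    · intro x hx
      rw [mem_ball, dist_eq_norm]
      have hcalc : y x + (ξ - p) - (ξ - p) = y x := by abel
      rw [Pi.add_apply, hcalc]
      have := hRb x hx
      rwa [mem_ball, dist_eq_norm, sub_zero] at this
    · intro hmem
      rw [mem_ball, dist_eq_norm] at hmem
      have hcalc : ξ - (ξ - p) = p := by abel
      rw [hcalc] at hmem
      exact absurd hmem (not_lt.mpr hpR.le)
  calc DT.deg y U ξ = DT.deg (H 0) U ξ := (congrFun h0 ξ).symm
    _ = DT.deg (H 1) U ξ := hdeg
    _ = 0 := (congrFun h1 ξ).trans hzero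

private lemma aux_sep {U : Set (EN N)} (hUb : IsBounded U) {y : EN N → EN N}
    (hy : ContinuousOn y (frontier U)) {K : Set (EN N)} (hK : IsCompact K)
    (hdisj : ∀ ξ ∈ K, ξ ∉ y '' frontier U) :
    ∃ ε > (0:ℝ), ∀ ξ ∈ K, ∀ x ∈ frontier U, ε ≤ dist ξ (y x) := by
  rcases K.eq_empty_or_nonempty with rfl | hKne
  · exact ⟨1, one_pos, fun ξ hξ => absurd hξ (notMem_empty ξ)⟩
  rcases eq_empty_or_nonempty (y '' frontier U) with hT | hTne
  · exact ⟨1, one_pos, fun ξ _ x hx =>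
      absurd (mem_image_of_mem y hx) (by rw [hT]; exact notMem_empty _)⟩
  have hfrc : IsCompact (frontier U) :=
    hUb.isCompact_closure.of_isClosed_subset isClosed_frontier frontier_subset_closure
  have hTc : IsCompact (y '' frontier U) := hfrc.image_of_continuousOn hy
  obtain ⟨ξ₀, hξ₀K, hmin⟩ := hK.exists_isMinOn hKne
    ((continuous_infDist_pt (y '' frontier U)).continuousOn)
  have hpos : 0 < infDist ξ₀ (y '' frontier U) :=
    (hTc.isClosed.notMem_iff_infDist_pos hTne).mp (hdisj ξ₀ hξ₀K)
  refine ⟨_, hpos, fun ξ hξ x hx => ?_⟩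
  exact le_trans ((isMinOn_iff.mp hmin) ξ hξ)
    (infDist_le_dist_of_mem (mem_image_of_mem y hx))

private lemma part_i (DT : DegreeTheory N) {U : Set (EN N)} (hUo : IsOpen U)
    (hUb : IsBounded U) {yn : ℕ → EN N → EN N} {y : EN N → EN N}
    (hyn : ∀ n, ContinuousOn (yn n) (frontier U)) (hy : ContinuousOn y (frontier U))
    (hconv : TendstoUniformlyOn yn y atTop (frontier U)) :
    ∀ K : Set (EN N), IsCompact K → K ⊆ imTloc DT y U →
      ∀ᶠ n in atTop, K ⊆ imTloc DT (yn n) U := by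
  intro K hK hKsub
  obtain ⟨ε, hε, hsep⟩ := aux_sep hUb hy hK (fun ξ hξ => (hKsub hξ).1)
  filter_upwards [Metric.tendstoUniformlyOn_iff.mp hconv ε hε] with n hn ξ hξK
  have hmem := hKsub hξK
  have key := deg_perturb DT hUo hUb hy (hyn n)
    (fun x hx => lt_of_lt_of_le (by rw [dist_comm]; exact hn x hx) (hsep ξ hξK x hx))
  exact ⟨key.2, by rw [key.1]; exact hmem.2⟩

private lemma part_ii (DT : DegreeTheory N) {U : Set (EN N)} (hUo : IsOpen U)
    (hUb : IsBounded U) {yn : ℕ → EN N → EN N} {y : EN N → EN N}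
    (hyn : ∀ n, ContinuousOn (yn n) (frontier U)) (hy : ContinuousOn y (frontier U))
    (hconv : TendstoUniformlyOn yn y atTop (frontier U)) :
    ∀ K : Set (EN N), IsCompact K → K ⊆ (imTloc DT y U ∪ y '' frontier U)ᶜ →
      ∀ᶠ n in atTop, K ⊆ (imTloc DT (yn n) U ∪ yn n '' frontier U)ᶜ := by
  intro K hK hKsub
  have hdisj : ∀ ξ ∈ K, ξ ∉ y '' frontier U := fun ξ hξ h => (hKsub hξ) (Or.inr h)
  have hdeg0 : ∀ ξ ∈ K, DT.deg y U ξ = 0 := by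
    intro ξ hξ
    by_contra h0
    exact (hKsub hξ) (Or.inl ⟨hdisj ξ hξ, h0⟩)
  obtain ⟨ε, hε, hsep⟩ := aux_sep hUb hy hK hdisj
  filter_upwards [Metric.tendstoUniformlyOn_iff.mp hconv ε hε] with n hn ξ hξK
  have key := deg_perturb DT hUo hUb hy (hyn n)
    (fun x hx => lt_of_lt_of_le (by rw [dist_comm]; exact hn x hx) (hsep ξ hξK x hx))
  intro hor
  rcases hor with hin | hin
  · exact hin.2 (key.1.trans (hdeg0 ξ hξK))
  · exact key.2 hin

private lemma part_iii (hN : 2 ≤ N) (DT : DegreeTheory N) {U : Set (EN N)}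
    (hUo : IsOpen U) (hUb : IsBounded U) {yn : ℕ → EN N → EN N} {y : EN N → EN N}
    (hyn : ∀ n, ContinuousOn (yn n) (frontier U)) (hy : ContinuousOn y (frontier U))
    (hconv : TendstoUniformlyOn yn y atTop (frontier U)) :
    ∀ O : Set (EN N), IsOpen O → IsBounded O → IsConnected Oᶜ →
      y '' frontier U ⊆ O →
      imTloc DT y U ⊆ O ∧ ∀ᶠ n in atTop, imTloc DT (yn n) U ⊆ O := by
  intro O hOo hOb hOc him
  have hmain : ∀ z : EN N → EN N, ContinuousOn z (frontier U) → z '' frontier U ⊆ O →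
      imTloc DT z U ⊆ O := by
    intro z hz himz ξ hξ
    by_contra hnot
    exact hξ.2 (deg_zero_of_connected_compl hN DT hUo hUb hz hOb hOc himz hnot)
  refine ⟨hmain y hy him, ?_⟩
  have hfrc : IsCompact (frontier U) :=
    hUb.isCompact_closure.of_isClosed_subset isClosed_frontier frontier_subset_closure
  have hTc : IsCompact (y '' frontier U) := hfrc.image_of_continuousOn hy
  obtain ⟨δ, hδ, hsub⟩ := hTc.exists_thickening_subset_open hOo him
  filter_upwards [Metric.tendstoUniformlyOn_iff.mp hconv δ hδ] with n hn
  apply hmain (yn n) (hyn n)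
  rintro _ ⟨x, hx, rfl⟩
  apply hsub
  rw [Metric.mem_thickening_iff]
  exact ⟨y x, mem_image_of_mem y hx, by rw [dist_comm]; exact hn x hx⟩

private lemma imTloc_subset_ball (hN : 2 ≤ N) (DT : DegreeTheory N) {U : Set (EN N)}
    (hUo : IsOpen U) (hUb : IsBounded U) {z : EN N → EN N}
    (hz : ContinuousOn z (frontier U)) {R : ℝ}
    (him : ∀ x ∈ frontier U, z x ∈ ball (0:EN N) R) :
    imTloc DT z U ⊆ ball (0:EN N) R := by
  intro ξ hξ
  by_contra hnot
  exact hξ.2 (deg_zero_of_ball hN DT hUo hUb hz him hnot)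

private lemma part_pointwise (DT : DegreeTheory N) {U : Set (EN N)} (hUo : IsOpen U)
    (hUb : IsBounded U) {yn : ℕ → EN N → EN N} {y : EN N → EN N}
    (hyn : ∀ n, ContinuousOn (yn n) (frontier U)) (hy : ContinuousOn y (frontier U))
    (hconv : TendstoUniformlyOn yn y atTop (frontier U)) {ξ : EN N}
    (hξ : ξ ∉ y '' frontier U) :
    ∀ᶠ n in atTop,
      (imTloc DT (yn n) U).indicator (fun _ => (1:ℝ)) ξ
        = (imTloc DT y U).indicator (fun _ => (1:ℝ)) ξ := by
  by_cases hmem : ξ ∈ imTloc DT y U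
  · filter_upwards [part_i DT hUo hUb hyn hy hconv {ξ} isCompact_singleton
      (singleton_subset_iff.mpr hmem)] with n hn
    rw [Set.indicator_of_mem (hn rfl), Set.indicator_of_mem hmem]
  · have hc : ξ ∈ (imTloc DT y U ∪ y '' frontier U)ᶜ := fun h => h.elim hmem hξ
    filter_upwards [part_ii DT hUo hUb hyn hy hconv {ξ} isCompact_singleton
      (singleton_subset_iff.mpr hc)] with n hn
    rw [Set.indicator_of_notMem (fun h => (hn rfl) (Or.inl h)),
      Set.indicator_of_notMem hmem]

private lemma part_iv_ae (DT : DegreeTheory N) {U : Set (EN N)} (hUo : IsOpen U)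
    (hUb : IsBounded U) {yn : ℕ → EN N → EN N} {y : EN N → EN N}
    (hyn : ∀ n, ContinuousOn (yn n) (frontier U)) (hy : ContinuousOn y (frontier U))
    (hconv : TendstoUniformlyOn yn y atTop (frontier U))
    (hnull0 : volume (y '' frontier U) = 0) :
    AEConv volume (fun n => (imTloc DT (yn n) U).indicator fun _ => (1:ℝ))
      ((imTloc DT y U).indicator fun _ => (1:ℝ)) := by
  have h0 : ∀ᵐ ξ : EN N, ξ ∉ y '' frontier U := measure_eq_zero_iff_ae_notMem.mp hnull0
  filter_upwards [h0] with ξ hξ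
  refine Tendsto.congr' ?_ tendsto_const_nhds
  filter_upwards [part_pointwise DT hUo hUb hyn hy hconv hξ] with n hn
  exact hn.symm

private lemma part_iv_l1 (hN : 2 ≤ N) (DT : DegreeTheory N) {U : Set (EN N)}
    (hUo : IsOpen U) (hUb : IsBounded U) {yn : ℕ → EN N → EN N} {y : EN N → EN N}
    (hyn : ∀ n, ContinuousOn (yn n) (frontier U)) (hy : ContinuousOn y (frontier U))
    (hconv : TendstoUniformlyOn yn y atTop (frontier U))
    (hnull0 : volume (y '' frontier U) = 0) :
    StrongLp volume 1 (fun n => (imTloc DT (yn n) U).indicator fun _ => (1:ℝ))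
      ((imTloc DT y U).indicator fun _ => (1:ℝ)) := by
  classical
  set χ : EN N → ℝ := (imTloc DT y U).indicator (fun _ => (1:ℝ)) with hχ
  set χn : ℕ → EN N → ℝ := fun n => (imTloc DT (yn n) U).indicator (fun _ => (1:ℝ))
    with hχn
  set f : ℕ → EN N → ℝ≥0∞ := fun n ξ => (‖χn n ξ - χ ξ‖₊ : ℝ≥0∞) with hf
  have hf_le_one : ∀ n ξ, f n ξ ≤ 1 := by
    intro n ξ
    simp only [hf, hχn, hχ]
    by_cases h1 : ξ ∈ imTloc DT (yn n) U <;> by_cases h2 : ξ ∈ imTloc DT y U <;>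
      simp [Set.indicator_of_mem, Set.indicator_of_notMem, h1, h2]
  have hf_zero : ∀ n ξ, χn n ξ = χ ξ → f n ξ = 0 := by
    intro n ξ h; simp [hf, h]
  have hfrc : IsCompact (frontier U) :=
    hUb.isCompact_closure.of_isClosed_subset isClosed_frontier frontier_subset_closure
  have hTc : IsCompact (y '' frontier U) := hfrc.image_of_continuousOn hy
  obtain ⟨R₀, hR₀⟩ := isBounded_iff_forall_norm_le.mp hTc.isBounded
  set R : ℝ := |R₀| + 1 with hR
  have hyball : ∀ x ∈ frontier U, y x ∈ ball (0:EN N) R := by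
    intro x hx
    rw [mem_ball, dist_eq_norm, sub_zero]
    have hbound := hR₀ _ (mem_image_of_mem y hx)
    linarith [le_abs_self R₀]
  have hA : imTloc DT y U ⊆ ball (0:EN N) (R+1) :=
    imTloc_subset_ball hN DT hUo hUb hy
      (fun x hx => ball_subset_ball (by linarith) (hyball x hx))
  obtain ⟨n₀, hn₀⟩ := eventually_atTop.mp (Metric.tendstoUniformlyOn_iff.mp hconv 1 one_pos)
  have hAn : ∀ n, n₀ ≤ n → imTloc DT (yn n) U ⊆ ball (0:EN N) (R+1) := by
    intro n hn
    apply imTloc_subset_ball hN DT hUo hUb (hyn n)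
    intro x hx
    rw [mem_ball, dist_eq_norm, sub_zero]
    have h1 := hn₀ n hn x hx
    have h2 : ‖y x‖ < R := by
      have := hyball x hx; rwa [mem_ball, dist_eq_norm, sub_zero] at this
    calc ‖yn n x‖ = dist (yn n x) 0 := by rw [dist_eq_norm, sub_zero]
      _ ≤ dist (yn n x) (y x) + dist (y x) 0 := dist_triangle _ _ _
      _ < 1 + R := by
          apply add_lt_add
          · rw [dist_comm]; exact h1
          · rw [dist_eq_norm, sub_zero]; exact h2
      _ = R + 1 := by ring
  have hD : ∀ n, n₀ ≤ n → ∀ ξ : EN N, χn n ξ ≠ χ ξ → ξ ∈ ball (0:EN N) (R+1) := by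
    intro n hn ξ hne
    by_contra hball
    apply hne
    simp only [hχn, hχ]
    rw [Set.indicator_of_notMem (fun h => hball (hAn n hn h)),
      Set.indicator_of_notMem (fun h => hball (hA h))]
  choose g hgmeas hgle hgeq using fun n => exists_measurable_le_lintegral_eq volume (f n)
  set W : ℕ → Set (EN N) := fun n => {ξ | g n ξ ≠ 0} with hW
  have hWmeas : ∀ n, MeasurableSet (W n) :=
    fun n => (hgmeas n) (measurableSet_singleton 0).compl
  have hWsub : ∀ n, ∀ ξ ∈ W n, χn n ξ ≠ χ ξ := by
    intro n ξ hξ h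
    exact hξ (le_antisymm (le_trans (hgle n ξ) (le_of_eq (hf_zero n ξ h))) zero_le)
  have hgW : ∀ n, ∫⁻ ξ, g n ξ ≤ volume (W n) := by
    intro n
    have hle : ∀ ξ, g n ξ ≤ (W n).indicator (fun _ => (1:ℝ≥0∞)) ξ := by
      intro ξ
      by_cases hξ : ξ ∈ W n
      · rw [Set.indicator_of_mem hξ]; exact le_trans (hgle n ξ) (hf_le_one n ξ)
      · rw [Set.indicator_of_notMem hξ]
        have hg0 : g n ξ = 0 := by simpa [hW] using hξ
        exact hg0.le
    calc ∫⁻ ξ, g n ξ ≤ ∫⁻ ξ, (W n).indicator (fun _ => (1:ℝ≥0∞)) ξ := lintegral_mono hle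
      _ = volume (W n) := lintegral_indicator_one (hWmeas n)
  show Tendsto (fun n => eLpNorm (fun x => χn n x - χ x) 1 volume) atTop (𝓝 0)
  have hrw : (fun n => eLpNorm (fun x => χn n x - χ x) 1 volume)
      = fun n => ∫⁻ ξ, f n ξ := by
    funext n; rw [eLpNorm_one_eq_lintegral_enorm]; rfl
  rw [hrw, ENNReal.tendsto_nhds_zero]
  intro ε hε
  by_contra hcon
  rw [Filter.not_eventually] at hcon
  set G : ℕ → Set (EN N) := fun j => ⋃ (k : ℕ) (_ : max j n₀ ≤ k), W k with hG
  have hGmeas : ∀ j, MeasurableSet (G j) :=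
    fun j => MeasurableSet.iUnion fun k => MeasurableSet.iUnion fun _ => hWmeas k
  have hGanti : Antitone G := by
    intro a b hab ξ hξ
    simp only [hG, mem_iUnion] at hξ ⊢
    obtain ⟨k, hk, hWk⟩ := hξ
    exact ⟨k, le_trans (max_le_max hab le_rfl) hk, hWk⟩
  have hGsub : ∀ j, G j ⊆ ball (0:EN N) (R+1) := by
    intro j
    refine iUnion₂_subset fun k hk ξ hξ => ?_
    exact hD k (le_trans (le_max_right _ _) hk) ξ (hWsub k ξ hξ)
  have hGfin : volume (G 0) ≠ ⊤ :=
    (lt_of_le_of_lt (measure_mono (hGsub 0)) measure_ball_lt_top).ne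
  have hGe : ∀ j, ε ≤ volume (G j) := by
    intro j
    obtain ⟨k, hk, hbad⟩ := (frequently_atTop.mp hcon) (max j n₀)
    calc ε ≤ ∫⁻ ξ, f k ξ := (not_le.mp hbad).le
      _ = ∫⁻ ξ, g k ξ := hgeq k
      _ ≤ volume (W k) := hgW k
      _ ≤ volume (G j) := measure_mono (by
          intro ξ hξ
          simp only [hG, mem_iUnion]
          exact ⟨k, hk, hξ⟩)
  have htend := tendsto_measure_iInter_atTop
    (fun j => (hGmeas j).nullMeasurableSet) hGanti ⟨0, hGfin⟩
  have hle : ε ≤ volume (⋂ j, G j) := ge_of_tendsto htend (Eventually.of_forall hGe)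
  have hzero : volume (⋂ j, G j) = 0 := by
    apply measure_mono_null _ hnull0
    intro ξ hξ
    by_contra hnotin
    obtain ⟨m, hm⟩ := eventually_atTop.mp
      (part_pointwise DT hUo hUb hyn hy hconv hnotin)
    obtain ⟨k, hk, hWk⟩ := mem_iUnion₂.mp (mem_iInter.mp hξ m)
    exact (hWsub k ξ hWk) (hm k (le_trans (le_max_left _ _) hk))
  rw [hzero] at hle
  exact absurd hle (not_le.mpr hε)

end StabilityAux

/-- Stability of topological images under uniform convergence.
If `y_n → y` uniformly on `∂U` and all boundary images are Lebesgue null, then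
compact subsets of `im_T(y,U)` are eventually contained in `im_T(y_n,U)`,
compact subsets of the exterior are eventually exterior, bounded open sets `O`
with connected complement containing `y(∂U)` eventually contain the topological
images, and `χ_{im_T(y_n,U)} → χ_{im_T(y,U)}` in `L¹(ℝ^N)` and a.e. -/
theorem topological_image_stability (N : ℕ) (hN : 2 ≤ N) (DT : DegreeTheory N)
    (Ω U : Set (EN N)) (hΩ : IsOpen Ω) (hU : IsOpen U) (hUb : IsBounded U)
    (hUcc : closure U ⊆ Ω)
    (yn : ℕ → EN N → EN N) (y : EN N → EN N)
    (hyn : ∀ n, ContinuousOn (yn n) (frontier U)) (hy : ContinuousOn y (frontier U))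
    (hconv : TendstoUniformlyOn yn y atTop (frontier U))
    (hnull : ∀ n, volume (yn n '' frontier U) = 0)
    (hnull0 : volume (y '' frontier U) = 0) :
    (∀ K : Set (EN N), IsCompact K → K ⊆ imTloc DT y U →
        ∀ᶠ n in atTop, K ⊆ imTloc DT (yn n) U) ∧
    (∀ K : Set (EN N), IsCompact K → K ⊆ (imTloc DT y U ∪ y '' frontier U)ᶜ →
        ∀ᶠ n in atTop, K ⊆ (imTloc DT (yn n) U ∪ yn n '' frontier U)ᶜ) ∧
    (∀ O : Set (EN N), IsOpen O → IsBounded O → IsConnected Oᶜ →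
        y '' frontier U ⊆ O →
        imTloc DT y U ⊆ O ∧ ∀ᶠ n in atTop, imTloc DT (yn n) U ⊆ O) ∧
    (StrongLp volume 1 (fun n => (imTloc DT (yn n) U).indicator fun _ => (1:ℝ))
        ((imTloc DT y U).indicator fun _ => (1:ℝ)) ∧
      AEConv volume (fun n => (imTloc DT (yn n) U).indicator fun _ => (1:ℝ))
        ((imTloc DT y U).indicator fun _ => (1:ℝ))) := by
  exact ⟨part_i DT hU hUb hyn hy hconv,
         part_ii DT hU hUb hyn hy hconv,
         part_iii hN DT hU hUb hyn hy hconv,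
         part_iv_l1 hN DT hU hUb hyn hy hconv hnull0,
         part_iv_ae DT hU hUb hyn hy hconv hnull0⟩

end Magnetoelasticity
end
end

section
/- Approximate differentiability of the inverse: Let y : Ω → ℝ^N be almost everywhere approximately differentiable with det ∇y ≠ 0 almost everywhere, and let A ⊂ Ω be measurable such that y is almost everywhere injective in A. Then, for every x₀ ∈ dom_G(y,A) with Θ^N(A,x₀) = 1, the inverse map (y|_{dom_G(y,A)})^{−1} : im_G(y,A) → dom_G(y,A) is approximately differentiable at y(x₀), with approximate gradient (∇y(x₀))^{−1}. -/
open MeasureTheory Metric Set Filter Topology Bornology ENNReal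
open scoped NNReal

noncomputable section

namespace Magnetoelasticity

variable {N : ℕ}

variable {Ω : Set (EN N)} {p : ℝ} {DT : DegreeTheory N}

section AuxDensity

variable {N : ℕ}

private lemma densityOneAt_of_compl {S : Set (EN N)} {x : EN N}
    (h : Tendsto (fun r => volume (ball x r \ S) / volume (ball x r)) (𝓝[>] 0) (𝓝 0)) :
    DensityOneAt S x := by
  have h1 : ∀ᶠ r in 𝓝[>] (0:ℝ), 1 - volume (ball x r \ S) / volume (ball x r)
      ≤ volume (S ∩ ball x r) / volume (ball x r) := by
    filter_upwards [self_mem_nhdsWithin] with r hr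
    have hr : (0:ℝ) < r := hr
    have hb0 : volume (ball x r) ≠ 0 := (measure_ball_pos _ _ hr).ne'
    have hbt : volume (ball x r) ≠ ⊤ := measure_ball_lt_top.ne
    rw [tsub_le_iff_right, ENNReal.div_add_div_same, ← ENNReal.div_self hb0 hbt]
    refine ENNReal.div_le_div_right ?_ _
    calc volume (ball x r) ≤ volume (ball x r ∩ S) + volume (ball x r \ S) :=
          measure_le_inter_add_diff _ _ _
      _ = volume (S ∩ ball x r) + volume (ball x r \ S) := by rw [inter_comm]
  have h2 : ∀ᶠ r in 𝓝[>] (0:ℝ), volume (S ∩ ball x r) / volume (ball x r) ≤ 1 := by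
    filter_upwards with r
    exact ENNReal.div_le_of_le_mul (by rw [one_mul]; exact measure_mono inter_subset_right)
  have hlow : Tendsto (fun r => 1 - volume (ball x r \ S) / volume (ball x r)) (𝓝[>] (0:ℝ))
      (𝓝 1) := by
    have := ENNReal.Tendsto.sub (tendsto_const_nhds (x := (1:ℝ≥0∞))) h (Or.inl one_ne_top)
    simpa using this
  exact tendsto_of_tendsto_of_tendsto_of_le_of_le' hlow tendsto_const_nhds h1 h2

private lemma compl_of_densityOneAt {S : Set (EN N)} (hS : MeasurableSet S) {x : EN N}
    (h : DensityOneAt S x) :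
    Tendsto (fun r => volume (ball x r \ S) / volume (ball x r)) (𝓝[>] 0) (𝓝 0) := by
  have key : ∀ᶠ r in 𝓝[>] (0:ℝ), volume (ball x r \ S) / volume (ball x r)
      = 1 - volume (S ∩ ball x r) / volume (ball x r) := by
    filter_upwards [self_mem_nhdsWithin] with r hr
    have hr : (0:ℝ) < r := hr
    have hb0 : volume (ball x r) ≠ 0 := (measure_ball_pos _ _ hr).ne'
    have hbt : volume (ball x r) ≠ ⊤ := measure_ball_lt_top.ne
    have hd : volume (S ∩ ball x r) / volume (ball x r) ≠ ⊤ :=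
      ne_top_of_le_ne_top one_ne_top
        (ENNReal.div_le_of_le_mul (by rw [one_mul]; exact measure_mono inter_subset_right))
    refine ENNReal.eq_sub_of_add_eq hd ?_
    rw [ENNReal.div_add_div_same, inter_comm, measure_diff_add_inter _ hS,
      ENNReal.div_self hb0 hbt]
  have hlim : Tendsto (fun r => 1 - volume (S ∩ ball x r) / volume (ball x r)) (𝓝[>] (0:ℝ))
      (𝓝 0) := by
    have := ENNReal.Tendsto.sub (tendsto_const_nhds (x := (1:ℝ≥0∞))) h (Or.inl one_ne_top)
    simpa using this
  exact Tendsto.congr' (key.mono fun r hr => hr.symm) hlim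

private lemma densityOneAt_of_closedBall {S : Set (EN N)} {x : EN N}
    (h : Tendsto (fun r => volume (S ∩ closedBall x r) / volume (closedBall x r)) (𝓝[>] 0)
      (𝓝 1)) : DensityOneAt S x := by
  refine h.congr' ?_
  filter_upwards [self_mem_nhdsWithin] with r hr
  have hr : (0:ℝ) < r := hr
  have hsph : volume (sphere x r) = 0 := Measure.addHaar_sphere_of_ne_zero _ _ hr.ne'
  have h1 : volume (closedBall x r) = volume (ball x r) := by
    refine le_antisymm ?_ (measure_mono ball_subset_closedBall)
    rw [← ball_union_sphere]
    exact le_trans (measure_union_le _ _) (by rw [hsph, add_zero])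
  have h2 : volume (S ∩ closedBall x r) = volume (S ∩ ball x r) := by
    refine le_antisymm ?_ (measure_mono (inter_subset_inter_right _ ball_subset_closedBall))
    rw [← ball_union_sphere, inter_union_distrib_left]
    refine le_trans (measure_union_le _ _) ?_
    rw [measure_mono_null inter_subset_right hsph, add_zero]
  rw [h1, h2]

private lemma ennreal_div_scale (a b d : ℝ≥0∞) (h0 : d ≠ 0) (ht : d ≠ ⊤) :
    a / b = d * (a / (d * b)) := by
  rw [mul_div_assoc', ENNReal.mul_div_mul_left _ _ h0 ht]

end AuxDensity

/-- Approximate differentiability of the inverse.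
If `y` is a.e. approximately differentiable with a.e. invertible approximate
gradient `G` and a.e. injective on a measurable `A ⊆ Ω`, then at every
`x₀ ∈ dom_G(y,A)` where `A` has density one, every inverse `g` of `y` on the
geometric domain is approximately differentiable at `y(x₀)` with approximate
gradient `(∇y(x₀))⁻¹`. -/
theorem approx_differentiability_of_inverse (N : ℕ) (hN : 2 ≤ N)
    (Ω : Set (EN N)) (hΩ : IsLipschitzDomain Ω)
    (y : EN N → EN N) (G : EN N → Mat N)
    (hae : ∀ᵐ x ∂(volume.restrict Ω), ApproxDiffAt y x (G x))
    (hdet : ∀ᵐ x ∂(volume.restrict Ω), (G x).det ≠ 0)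
    (A : Set (EN N)) (hAsub : A ⊆ Ω) (hAmeas : MeasurableSet A)
    (hinj : AEInjOn y A)
    (x₀ : EN N) (hx₀ : x₀ ∈ domG Ω y G A) (hdens : DensityOneAt A x₀)
    (g : EN N → EN N) (hg : ∀ x ∈ domG Ω y G A, g (y x) = x) :
    ApproxDiffAt g (y x₀) (G x₀)⁻¹ := by
  have hx₀' := hx₀
  haveI : Nonempty (Fin N) := ⟨⟨0, by omega⟩⟩
  haveI : Nontrivial (EN N) := inferInstance
  obtain ⟨hxA, hxΩ, happ, hd0, K, hKcomp, hKΩ, hxK, hKdens, w, hw, hyw, hDw⟩ := hx₀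
  -- the derivative of `w` at `x₀` is the matrix `G x₀`
  have hf' : ∀ v, fderiv ℝ w x₀ v = mvec (G x₀) v := by
    intro v
    have hb : v = ∑ j, v j • (EuclideanSpace.single j (1:ℝ)) := by
      ext i; rw [WithLp.ofLp_sum, Finset.sum_apply]; simp [EuclideanSpace.single_apply]
    conv_lhs => rw [hb]
    rw [map_sum]
    ext i
    rw [WithLp.ofLp_sum, Finset.sum_apply]
    simp only [_root_.map_smul, PiLp.smul_apply, smul_eq_mul]
    have hDwx := hDw x₀ hxK
    simp only [hDwx]
    simp [mvec, toE, Matrix.mulVec, dotProduct, mul_comm]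
  have hGinv : ∀ u : EN N, mvec (G x₀)⁻¹ (mvec (G x₀) u) = u := by
    intro u
    ext i
    show ((G x₀)⁻¹.mulVec ((G x₀).mulVec (fun i => u i))) i = u i
    rw [Matrix.mulVec_mulVec, Matrix.nonsing_inv_mul (G x₀) (isUnit_iff_ne_zero.mpr hd0),
      Matrix.one_mulVec]
  have hdeteq : (fderiv ℝ w x₀).det = (G x₀).det := by
    let b := (EuclideanSpace.basisFun (Fin N) ℝ).toBasis
    have hmat : LinearMap.toMatrix b b ((fderiv ℝ w x₀ : EN N →L[ℝ] EN N) : EN N →ₗ[ℝ] EN N)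
        = G x₀ := by
      ext i j
      rw [LinearMap.toMatrix_apply]
      simp only [OrthonormalBasis.coe_toBasis, OrthonormalBasis.coe_toBasis_repr_apply,
        EuclideanSpace.basisFun_apply, b]
      simp only [ContinuousLinearMap.coe_coe, hf']
      simp [mvec, toE, Matrix.mulVec, dotProduct, EuclideanSpace.single_apply,
        EuclideanSpace.basisFun_repr]
    rw [ContinuousLinearMap.det, ← LinearMap.det_toMatrix b, hmat]
  have hdet' : (fderiv ℝ w x₀).det ≠ 0 := by rw [hdeteq]; exact hd0
  -- inverse function theorem setup
  set f'e := (fderiv ℝ w x₀).toContinuousLinearEquivOfDetNeZero hdet' with hf'e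
  have hstrict : HasStrictFDerivAt w (f'e : EN N →L[ℝ] EN N) x₀ := by
    rw [hf'e, ContinuousLinearMap.coe_toContinuousLinearEquivOfDetNeZero]
    exact hw.contDiffAt.hasStrictFDerivAt one_ne_zero
  set inv := hstrict.localInverse w f'e x₀ with hinvdef
  have hd : HasStrictFDerivAt inv (f'e.symm : EN N →L[ℝ] EN N) (w x₀) :=
    hstrict.to_localInverse
  have h0 : inv (w x₀) = x₀ := hstrict.localInverse_apply_image
  have hsymm : ∀ v, (f'e.symm : EN N →L[ℝ] EN N) v = mvec (G x₀)⁻¹ v := by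
    intro v
    obtain ⟨u, rfl⟩ : ∃ u, v = f'e u := ⟨f'e.symm v, (f'e.apply_symm_apply v).symm⟩
    have h1 : (f'e.symm : EN N →L[ℝ] EN N) (f'e u) = u := by simp
    rw [h1, show (f'e u : EN N) = mvec (G x₀) u from hf' u, hGinv]
  have hyx : y x₀ = w x₀ := hyw hxK
  -- bound for the Jacobian determinant near x₀
  obtain ⟨M, hM⟩ := (isCompact_closedBall x₀ 1).exists_bound_of_continuousOn
    ((ContinuousLinearMap.continuous_det.comp (hw.continuous_fderiv one_ne_zero)).continuousOn)
  have hM0 : 0 ≤ M := le_trans (norm_nonneg _) (hM x₀ (mem_closedBall_self zero_le_one))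
  -- Lipschitz bound for the local inverse
  obtain ⟨C₀, s, hs, hlip⟩ := hd.exists_lipschitzOnWith
  set C : ℝ := (C₀ : ℝ) + 1 with hCdef
  have hCpos : (0:ℝ) < C := by positivity
  -- the good set S
  have h1 := (ae_restrict_iff' hΩ.1.measurableSet).mp hae
  have h2 := (ae_restrict_iff' hΩ.1.measurableSet).mp hdet
  have h3 : ∀ᵐ x ∂(volume : Measure (EN N)), x ∈ K → DensityOneAt K x := by
    have hbes := Besicovitch.ae_tendsto_measure_inter_div (volume : Measure (EN N)) K
    rw [ae_restrict_iff' hKcomp.measurableSet] at hbes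
    filter_upwards [hbes] with x hx hxK'
    exact densityOneAt_of_closedBall (hx hxK')
  have hfull := h1.and (h2.and h3)
  set B := {x : EN N | ¬ ((x ∈ Ω → ApproxDiffAt y x (G x)) ∧ (x ∈ Ω → (G x).det ≠ 0) ∧
      (x ∈ K → DensityOneAt K x))} with hBdef
  have hBnull : volume B = 0 := by
    have : ∀ᵐ x ∂(volume : Measure (EN N)), (x ∈ Ω → ApproxDiffAt y x (G x)) ∧
        (x ∈ Ω → (G x).det ≠ 0) ∧ (x ∈ K → DensityOneAt K x) := hfull
    exact this
  set Z := toMeasurable volume B with hZdef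
  have hZnull : volume Z = 0 := by rw [hZdef, measure_toMeasurable]; exact hBnull
  have hZmeas : MeasurableSet Z := measurableSet_toMeasurable _ _
  set S := (A ∩ K) \ Z with hSdef
  have hSmeas : MeasurableSet S := (hAmeas.inter hKcomp.measurableSet).diff hZmeas
  have hSdom : ∀ x ∈ S, x ∈ domG Ω y G A := by
    rintro x ⟨⟨hxA', hxK'⟩, hxZ⟩
    have hxB : x ∉ B := fun h => hxZ (subset_toMeasurable _ _ h)
    rw [hBdef, mem_setOf_eq, not_not] at hxB
    exact ⟨hxA', hAsub hxA', hxB.1 (hAsub hxA'), hxB.2.1 (hAsub hxA'), K, hKcomp, hKΩ, hxK',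
      hxB.2.2 hxK', w, hw, hyw, hDw⟩
  -- density-one of S at x₀, complement form
  have hcA := compl_of_densityOneAt hAmeas hdens
  have hcK := compl_of_densityOneAt hKcomp.measurableSet hKdens
  have hSc : Tendsto (fun r => volume (ball x₀ r \ S) / volume (ball x₀ r)) (𝓝[>] 0)
      (𝓝 0) := by
    have hbound : ∀ r : ℝ, volume (ball x₀ r \ S) / volume (ball x₀ r)
        ≤ volume (ball x₀ r \ A) / volume (ball x₀ r)
          + volume (ball x₀ r \ K) / volume (ball x₀ r) := by
      intro r
      rw [ENNReal.div_add_div_same]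
      refine ENNReal.div_le_div_right ?_ _
      have hsub : ball x₀ r \ S ⊆ ((ball x₀ r \ A) ∪ (ball x₀ r \ K)) ∪ Z := by
        rintro z ⟨hzb, hzS⟩
        by_cases hz : z ∈ Z
        · exact Or.inr hz
        · rw [hSdef] at hzS
          by_cases hzA : z ∈ A
          · by_cases hzK : z ∈ K
            · exact absurd ⟨⟨hzA, hzK⟩, hz⟩ hzS
            · exact Or.inl (Or.inr ⟨hzb, hzK⟩)
          · exact Or.inl (Or.inl ⟨hzb, hzA⟩)
      calc volume (ball x₀ r \ S)
          ≤ volume (((ball x₀ r \ A) ∪ (ball x₀ r \ K)) ∪ Z) := measure_mono hsub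
        _ ≤ volume ((ball x₀ r \ A) ∪ (ball x₀ r \ K)) + volume Z := measure_union_le _ _
        _ = volume ((ball x₀ r \ A) ∪ (ball x₀ r \ K)) := by rw [hZnull, add_zero]
        _ ≤ volume (ball x₀ r \ A) + volume (ball x₀ r \ K) := measure_union_le _ _
    have hsum := hcA.add hcK
    rw [add_zero] at hsum
    exact tendsto_of_tendsto_of_tendsto_of_le_of_le tendsto_const_nhds hsum
      (fun r => zero_le) hbound
  -- main argument
  intro ε hε
  apply densityOneAt_of_compl
  set T := {ξ : EN N | ‖g ξ - g (y x₀) - mvec (G x₀)⁻¹ (ξ - y x₀)‖ ≤ ε * ‖ξ - y x₀‖} with hTdef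
  have hri : ∀ᶠ ξ in 𝓝 (w x₀), w (inv ξ) = ξ := hstrict.eventually_right_inverse
  have hlittle : ∀ᶠ ξ in 𝓝 (w x₀),
      ‖inv ξ - inv (w x₀) - (f'e.symm : EN N →L[ℝ] EN N) (ξ - w x₀)‖ ≤ ε * ‖ξ - w x₀‖ :=
    hd.hasFDerivAt.isLittleO.def hε
  have hsev : ∀ᶠ ξ in 𝓝 (w x₀), ξ ∈ s := hs
  obtain ⟨r₂, hr₂, hball⟩ := Metric.eventually_nhds_iff_ball.mp (hri.and (hlittle.and hsev))
  have hs0 : w x₀ ∈ s := (hball (w x₀) (mem_ball_self hr₂)).2.2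
  set rmin : ℝ := min r₂ (1 / C) with hrmindef
  have hrminpos : 0 < rmin := lt_min hr₂ (by positivity)
  set κ : ℝ≥0∞ := ENNReal.ofReal M * ENNReal.ofReal (C ^ N) with hκdef
  have hκt : κ ≠ ⊤ := by
    rw [hκdef]; exact ENNReal.mul_ne_top ENNReal.ofReal_ne_top ENNReal.ofReal_ne_top
  -- inclusion step
  have hsub2 : ∀ r : ℝ, 0 < r → r < rmin →
      ball (y x₀) r \ T ⊆ w '' (ball x₀ (C * r) \ S) := by
    rintro r hr0 hrm ξ ⟨hξb, hξT⟩
    have hdξ : dist ξ (w x₀) < r := by rw [← hyx]; exact mem_ball.mp hξb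
    have hξr₂ : ξ ∈ ball (w x₀) r₂ :=
      mem_ball.mpr (lt_of_lt_of_le hdξ (le_trans hrm.le (min_le_left _ _)))
    obtain ⟨hri', hlit', hsξ⟩ := hball ξ hξr₂
    have hxb : inv ξ ∈ ball x₀ (C * r) := by
      have hlb : dist (inv ξ) (inv (w x₀)) ≤ (C₀ : ℝ) * dist ξ (w x₀) :=
        hlip.dist_le_mul ξ hsξ (w x₀) hs0
      rw [h0] at hlb
      have hle : dist (inv ξ) x₀ ≤ C * dist ξ (w x₀) := by
        refine le_trans hlb ?_
        have : (C₀ : ℝ) ≤ C := by rw [hCdef]; linarith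
        nlinarith [dist_nonneg (x := ξ) (y := w x₀)]
      exact mem_ball.mpr (lt_of_le_of_lt hle
        (by exact mul_lt_mul_of_pos_left hdξ hCpos))
    have hxS : inv ξ ∉ S := by
      intro hxS
      apply hξT
      have hdom := hSdom _ hxS
      have hxK2 : inv ξ ∈ K := hxS.1.2
      have hyx2 : y (inv ξ) = ξ := by rw [hyw hxK2]; exact hri'
      have hgξ : g ξ = inv ξ := by
        have hgg := hg _ hdom
        rwa [hyx2] at hgg
      have hgy₀ : g (y x₀) = x₀ := hg x₀ hx₀'
      rw [hTdef, mem_setOf_eq, hgξ, hgy₀, hyx]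
      have hfin := hlit'
      rw [h0, hsymm (ξ - w x₀)] at hfin
      exact hfin
    exact ⟨inv ξ, ⟨hxb, hxS⟩, hri'⟩
  -- the quantitative bound
  have hkey : ∀ᶠ r in 𝓝[>] (0:ℝ),
      volume (ball (y x₀) r \ T) / volume (ball (y x₀) r)
        ≤ κ * (volume (ball x₀ (C * r) \ S) / volume (ball x₀ (C * r))) := by
    filter_upwards [Ioo_mem_nhdsGT hrminpos] with r hr
    obtain ⟨hr0, hrm⟩ := hr
    have hCr1 : C * r < 1 := by
      have h1 : r < 1 / C := lt_of_lt_of_le hrm (min_le_right _ _)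
      calc C * r < C * (1 / C) := mul_lt_mul_of_pos_left h1 hCpos
        _ = 1 := by field_simp
    have himg : volume (ball (y x₀) r \ T)
        ≤ ENNReal.ofReal M * volume (ball x₀ (C * r) \ S) := by
      refine le_trans (measure_mono (hsub2 r hr0 hrm)) ?_
      calc volume (w '' (ball x₀ (C * r) \ S))
          ≤ ∫⁻ x in ball x₀ (C * r) \ S, ENNReal.ofReal |(fderiv ℝ w x).det| ∂volume :=
            addHaar_image_le_lintegral_abs_det_fderiv volume
              (measurableSet_ball.diff hSmeas)
              (fun x _ => ((hw.differentiable one_ne_zero x).hasFDerivAt).hasFDerivWithinAt)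
        _ ≤ ∫⁻ _ in ball x₀ (C * r) \ S, ENNReal.ofReal M ∂volume := by
            refine setLIntegral_mono' (measurableSet_ball.diff hSmeas) (fun x hx => ?_)
            refine ENNReal.ofReal_le_ofReal ?_
            have hxcb : x ∈ closedBall x₀ 1 :=
              mem_closedBall.mpr (le_of_lt (lt_trans (mem_ball.mp hx.1) hCr1))
            have := hM x hxcb
            rwa [Real.norm_eq_abs] at this
        _ = ENNReal.ofReal M * volume (ball x₀ (C * r) \ S) := setLIntegral_const _ _
    have hb1 : volume (ball (y x₀) r)
        = ENNReal.ofReal (r ^ N) * volume (ball (0:EN N) 1) := by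
      rw [Measure.addHaar_ball _ _ hr0.le, finrank_euclideanSpace_fin]
    have hb2 : volume (ball x₀ (C * r))
        = ENNReal.ofReal (C ^ N) * volume (ball (y x₀) r) := by
      rw [Measure.addHaar_ball _ _ (by positivity : (0:ℝ) ≤ C * r),
        finrank_euclideanSpace_fin, hb1, ← mul_assoc,
        ← ENNReal.ofReal_mul (by positivity), mul_pow]
    have hCN0 : ENNReal.ofReal (C ^ N) ≠ 0 := by
      simp [ENNReal.ofReal_eq_zero, not_le, pow_pos hCpos]
    calc volume (ball (y x₀) r \ T) / volume (ball (y x₀) r)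
        ≤ (ENNReal.ofReal M * volume (ball x₀ (C * r) \ S)) / volume (ball (y x₀) r) :=
          ENNReal.div_le_div_right himg _
      _ = ENNReal.ofReal M * (volume (ball x₀ (C * r) \ S) / volume (ball (y x₀) r)) :=
          mul_div_assoc _ _ _
      _ = ENNReal.ofReal M * (ENNReal.ofReal (C ^ N)
            * (volume (ball x₀ (C * r) \ S) / volume (ball x₀ (C * r)))) := by
          congr 1
          rw [hb2]
          exact ennreal_div_scale _ _ _ hCN0 ENNReal.ofReal_ne_top
      _ = κ * (volume (ball x₀ (C * r) \ S) / volume (ball x₀ (C * r))) := by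
          rw [hκdef, mul_assoc]
  -- limit of the right-hand side
  have hCr : Tendsto (fun r : ℝ => C * r) (𝓝[>] 0) (𝓝[>] 0) := by
    refine tendsto_nhdsWithin_of_tendsto_nhds_of_eventually_within _ ?_ ?_
    · have : Tendsto (fun r : ℝ => C * r) (𝓝 0) (𝓝 (C * 0)) :=
        tendsto_const_nhds.mul tendsto_id
      simpa using this.mono_left nhdsWithin_le_nhds
    · filter_upwards [self_mem_nhdsWithin] with r hr
      exact mul_pos hCpos hr
  have hRHS : Tendsto (fun r : ℝ =>
      κ * (volume (ball x₀ (C * r) \ S) / volume (ball x₀ (C * r)))) (𝓝[>] 0) (𝓝 0) := by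
    have hcomp := hSc.comp hCr
    have := ENNReal.Tendsto.const_mul hcomp (Or.inr hκt)
    simpa [Function.comp] using this
  exact tendsto_of_tendsto_of_tendsto_of_le_of_le' tendsto_const_nhds hRHS
    (Eventually.of_forall fun r => zero_le) hkey


end Magnetoelasticity
end
end
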